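/- Fix d ≥ 2, let p_k = (1/k)/H_d with H_d = ∑_{j=1}^d 1/j, and let f̃(θ) = KL(p‖q(θ)) be the additive logistic unigram loss on ℝ^{d−1}. Run sign descent with weight decay starting at θ₀ = 0 with λ = 1/log(d) and η_t = 2/(λ(t+1)): θ_{t+1} = (1 − λη_t)θ_t − η_t Δ_t, where ‖Δ_t‖_∞ ≤ 1 and ⟨∇f̃(θ_t), Δ_t⟩ = ‖∇f̃(θ_t)‖₁. Then for every T ≥ 1, f̃(θ_T) − min f̃ ≤ 8(log d)² / (T + 2). -/

import Mathlib

open Real Finset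

/-- The gradient of `f : ℝ^n → ℝ` (vector of partial derivatives). -/
noncomputable def grad {n : ℕ} (f : (Fin n → ℝ) → ℝ) (θ : Fin n → ℝ) : Fin n → ℝ :=
  fun k => fderiv ℝ f θ (Pi.single k 1)

/-- The ℓ1 norm on `ℝ^n`. -/
noncomputable def l1norm {n : ℕ} (x : Fin n → ℝ) : ℝ := ∑ k, |x k|


lemma lse_bounds (M : ℕ) (z v : Fin (M + 1) → ℝ) (s : ℝ) (hs : ∀ k, |v k| ≤ s) :
    Real.log (∑ k, Real.exp (z k)) + (∑ k, v k * Real.exp (z k)) / (∑ k, Real.exp (z k)) ≤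
        Real.log (∑ k, Real.exp (z k + v k)) ∧
      Real.log (∑ k, Real.exp (z k + v k)) ≤
        Real.log (∑ k, Real.exp (z k)) + (∑ k, v k * Real.exp (z k)) / (∑ k, Real.exp (z k))
          + s ^ 2 / 2 := by
  set A : ℝ → ℝ := fun t => ∑ k, Real.exp (z k + t * v k) with hA_def
  set B : ℝ → ℝ := fun t => ∑ k, v k * Real.exp (z k + t * v k) with hB_def
  set C : ℝ → ℝ := fun t => ∑ k, v k ^ 2 * Real.exp (z k + t * v k) with hC_def
  have hA : ∀ t, 0 < A t := fun t =>
    Finset.sum_pos (fun k _ => Real.exp_pos _) Finset.univ_nonempty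
  have hA' : ∀ t, HasDerivAt A (B t) t := by
    intro t
    apply HasDerivAt.fun_sum
    intro k _
    have h1 : HasDerivAt (fun t : ℝ => z k + t * v k) (v k) t := by
      simpa using ((hasDerivAt_id t).mul_const (v k)).const_add (z k)
    simpa [mul_comm] using h1.exp
  have hB' : ∀ t, HasDerivAt B (C t) t := by
    intro t
    apply HasDerivAt.fun_sum
    intro k _
    have h1 : HasDerivAt (fun t : ℝ => z k + t * v k) (v k) t := by
      simpa using ((hasDerivAt_id t).mul_const (v k)).const_add (z k)
    have := (h1.exp).const_mul (v k)
    exact this.congr_deriv (by ring)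
  have hCA : ∀ t, C t ≤ s ^ 2 * A t := by
    intro t
    rw [hC_def, hA_def, Finset.mul_sum]
    apply Finset.sum_le_sum
    intro k _
    have h2 := abs_le.mp (hs k)
    have : v k ^ 2 ≤ s ^ 2 := by nlinarith [h2.1, h2.2]
    exact mul_le_mul_of_nonneg_right this (Real.exp_pos _).le
  have hBB : ∀ t, (B t) ^ 2 ≤ C t * A t := by
    intro t
    have hee : ∀ w : ℝ, Real.exp (w / 2) * Real.exp (w / 2) = Real.exp w := fun w => by
      rw [← Real.exp_add, add_halves]
    have hee2 : ∀ w : ℝ, Real.exp (w / 2) ^ 2 = Real.exp w := fun w => by rw [sq, hee]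
    have := Finset.sum_mul_sq_le_sq_mul_sq Finset.univ
      (fun k => v k * Real.exp ((z k + t * v k) / 2)) (fun k => Real.exp ((z k + t * v k) / 2))
    calc (B t) ^ 2 = (∑ k, (v k * Real.exp ((z k + t * v k) / 2)) *
          Real.exp ((z k + t * v k) / 2)) ^ 2 := by
          congr 1; apply Finset.sum_congr rfl; intro k _; rw [mul_assoc, hee]
      _ ≤ (∑ k, (v k * Real.exp ((z k + t * v k) / 2)) ^ 2) *
          (∑ k, Real.exp ((z k + t * v k) / 2) ^ 2) := this
      _ = C t * A t := by
          congr 1 <;> (apply Finset.sum_congr rfl; intro k _)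
          · rw [mul_pow, hee2]
          · rw [hee2]
  -- monotonicity of B/A  (convexity) and of s^2 t - B/A (smoothness)
  have hquot : ∀ t, HasDerivAt (fun t => B t / A t)
      ((C t * A t - B t * B t) / (A t) ^ 2) t := fun t =>
    (hB' t).div (hA' t) (hA t).ne'
  have hqnonneg : ∀ t, 0 ≤ (C t * A t - B t * B t) / (A t) ^ 2 := by
    intro t
    apply div_nonneg _ (sq_nonneg _)
    have := hBB t
    nlinarith [this]
  have hqle : ∀ t, (C t * A t - B t * B t) / (A t) ^ 2 ≤ s ^ 2 := by
    intro t
    rw [div_le_iff₀ (by positivity)]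
    have h1 := hCA t
    have h2 := hA t
    nlinarith [sq_nonneg (B t)]
  have hmono : Monotone (fun t => B t / A t) := by
    apply monotone_of_deriv_nonneg
    · intro t; exact ((hquot t).differentiableAt : DifferentiableAt ℝ _ t)
    · intro t; rw [(hquot t).deriv]; exact hqnonneg t
  have hmono2' : ∀ t : ℝ, HasDerivAt (fun t => s ^ 2 * t - B t / A t)
      (s ^ 2 - (C t * A t - B t * B t) / (A t) ^ 2) t := by
    intro t
    have := ((hasDerivAt_id t).const_mul (s ^ 2)).fun_sub (hquot t)
    simpa using this
  have hmono2 : Monotone (fun t => s ^ 2 * t - B t / A t) := by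
    apply monotone_of_deriv_nonneg
    · intro t; exact (hmono2' t).differentiableAt
    · intro t
      rw [(hmono2' t).deriv]
      linarith [hqle t]
  have hphi : ∀ t, HasDerivAt (fun t => Real.log (A t)) (B t / A t) t := fun t =>
    (hA' t).log (hA t).ne'
  -- lower bound: ψ₂ t = log (A t) - t * (B 0 / A 0) is monotone on [0, ∞)
  have hlow : Real.log (A 0) + B 0 / A 0 ≤ Real.log (A 1) := by
    have hψ : ∀ t, HasDerivAt (fun t => Real.log (A t) - t * (B 0 / A 0))
        (B t / A t - B 0 / A 0) t := by
      intro t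
      simpa using (hphi t).fun_sub ((hasDerivAt_id t).mul_const (B 0 / A 0))
    have hm : MonotoneOn (fun t => Real.log (A t) - t * (B 0 / A 0)) (Set.Ici (0:ℝ)) := by
      apply monotoneOn_of_deriv_nonneg (convex_Ici 0)
      · exact fun t _ => ((hψ t).differentiableAt).continuousAt.continuousWithinAt
      · exact fun t _ => ((hψ t).differentiableAt).differentiableWithinAt
      · intro t ht
        rw [(hψ t).deriv]
        have : (0:ℝ) ≤ t := le_of_lt (by simpa using ht)
        have := hmono this
        simpa using this
    have := hm (Set.self_mem_Ici) (by norm_num : (1:ℝ) ∈ Set.Ici (0:ℝ)) zero_le_one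
    simp only [zero_mul, sub_zero, one_mul] at this
    linarith
  have hup : Real.log (A 1) ≤ Real.log (A 0) + B 0 / A 0 + s ^ 2 / 2 := by
    have hψ : ∀ t, HasDerivAt
        (fun t => Real.log (A t) - t * (B 0 / A 0) - s ^ 2 * t ^ 2 / 2)
        (B t / A t - B 0 / A 0 - s ^ 2 * t) t := by
      intro t
      have h1 : HasDerivAt (fun t : ℝ => s ^ 2 * t ^ 2 / 2) (s ^ 2 * t) t := by
        have := ((hasDerivAt_pow 2 t).const_mul (s ^ 2)).div_const 2
        exact this.congr_deriv (by ring)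
      have := ((hphi t).fun_sub ((hasDerivAt_id t).mul_const (B 0 / A 0))).fun_sub h1
      simpa using this
    have hm : AntitoneOn (fun t => Real.log (A t) - t * (B 0 / A 0) - s ^ 2 * t ^ 2 / 2)
        (Set.Ici (0:ℝ)) := by
      apply antitoneOn_of_deriv_nonpos (convex_Ici 0)
      · exact fun t _ => ((hψ t).differentiableAt).continuousAt.continuousWithinAt
      · exact fun t _ => ((hψ t).differentiableAt).differentiableWithinAt
      · intro t ht
        rw [(hψ t).deriv]
        have ht0 : (0:ℝ) ≤ t := le_of_lt (by simpa using ht)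
        have := hmono2 ht0
        simp only [mul_zero, zero_mul, sub_zero] at this ⊢
        linarith
    have := hm (Set.self_mem_Ici) (by norm_num : (1:ℝ) ∈ Set.Ici (0:ℝ)) zero_le_one
    simp only [zero_mul, sub_zero, one_mul, mul_zero] at this
    nlinarith [this]
  have hA1 : A 1 = ∑ k, Real.exp (z k + v k) := by simp [hA_def]
  have hA0 : A 0 = ∑ k, Real.exp (z k) := by simp [hA_def]
  have hB0 : B 0 = ∑ k, v k * Real.exp (z k) := by simp [hB_def]
  rw [hA1, hA0, hB0] at hlow hup
  exact ⟨hlow, hup⟩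



lemma logistic_hasFDeriv (N : ℕ) (c : ℝ) (w : Fin N → ℝ) (x : Fin N → ℝ) :
    HasFDerivAt (fun x : Fin N → ℝ => c + Real.log (1 + ∑ j, Real.exp (x j)) - ∑ j, w j * x j)
      (∑ j : Fin N, (Real.exp (x j) / (1 + ∑ i, Real.exp (x i)) - w j) •
        (ContinuousLinearMap.proj j : (Fin N → ℝ) →L[ℝ] ℝ)) x := by
  have hS : (0:ℝ) < 1 + ∑ i, Real.exp (x i) := by positivity
  have hS' : HasFDerivAt (fun x : Fin N → ℝ => 1 + ∑ j, Real.exp (x j))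
      (∑ j : Fin N, Real.exp (x j) • (ContinuousLinearMap.proj j : (Fin N → ℝ) →L[ℝ] ℝ)) x := by
    apply HasFDerivAt.const_add
    apply HasFDerivAt.fun_sum
    intro j _
    exact ((ContinuousLinearMap.proj j : (Fin N → ℝ) →L[ℝ] ℝ).hasFDerivAt (x := x)).exp
  have hL : HasFDerivAt (fun x : Fin N → ℝ => Real.log (1 + ∑ j, Real.exp (x j)))
      ((1 + ∑ i, Real.exp (x i))⁻¹ •
        ∑ j : Fin N, Real.exp (x j) • (ContinuousLinearMap.proj j : (Fin N → ℝ) →L[ℝ] ℝ)) x :=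
    hS'.log hS.ne'
  have hW : HasFDerivAt (fun x : Fin N → ℝ => ∑ j, w j * x j)
      (∑ j : Fin N, w j • (ContinuousLinearMap.proj j : (Fin N → ℝ) →L[ℝ] ℝ)) x := by
    apply HasFDerivAt.fun_sum
    intro j _
    exact ((ContinuousLinearMap.proj j : (Fin N → ℝ) →L[ℝ] ℝ).hasFDerivAt (x := x)).const_mul (w j)
  have := (hL.const_add c).fun_sub hW
  refine this.congr_fderiv (Eq.symm ?_)
  ext y
  simp only [ContinuousLinearMap.coe_sum', Finset.sum_apply, ContinuousLinearMap.coe_smul',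
    Pi.smul_apply, ContinuousLinearMap.proj_apply, smul_eq_mul, ContinuousLinearMap.coe_sub',
    Pi.sub_apply]
  rw [Finset.mul_sum, ← Finset.sum_sub_distrib]
  apply Finset.sum_congr rfl
  intro j _
  field_simp

lemma grad_eval {N : ℕ} (f : (Fin N → ℝ) → ℝ) (x : Fin N → ℝ)
    (φ : (Fin N → ℝ) →L[ℝ] ℝ) (h : HasFDerivAt f φ x) :
    grad f x = fun k => φ (Pi.single k 1) := by
  funext k
  rw [grad, h.fderiv]

lemma logistic_grad (N : ℕ) (c : ℝ) (w : Fin N → ℝ) (x : Fin N → ℝ) :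
    grad (fun x : Fin N → ℝ => c + Real.log (1 + ∑ j, Real.exp (x j)) - ∑ j, w j * x j) x
      = fun k => Real.exp (x k) / (1 + ∑ i, Real.exp (x i)) - w k := by
  rw [grad_eval _ _ _ (logistic_hasFDeriv N c w x)]
  funext k
  simp only [ContinuousLinearMap.coe_sum', Finset.sum_apply, ContinuousLinearMap.coe_smul',
    Pi.smul_apply, ContinuousLinearMap.proj_apply, smul_eq_mul]
  rw [Finset.sum_eq_single k]
  · simp
  · intro j _ hj
    simp [Pi.single_apply, hj.symm]
  · simp

lemma logistic_conv_smooth (N : ℕ) (c : ℝ) (w : Fin N → ℝ) (F : (Fin N → ℝ) → ℝ)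
    (hF : ∀ x, F x = c + Real.log (1 + ∑ j, Real.exp (x j)) - ∑ j, w j * x j)
    (x y : Fin N → ℝ) :
    F x + ∑ k, (Real.exp (x k) / (1 + ∑ i, Real.exp (x i)) - w k) * (y k - x k) ≤ F y ∧
    F y ≤ F x + (∑ k, (Real.exp (x k) / (1 + ∑ i, Real.exp (x i)) - w k) * (y k - x k))
        + ‖y - x‖ ^ 2 / 2 := by
  rw [hF x, hF y]
  set z : Fin (N + 1) → ℝ := Fin.snoc x 0 with hz
  set v : Fin (N + 1) → ℝ := Fin.snoc (fun j => y j - x j) 0 with hv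
  have hs : ∀ k, |v k| ≤ ‖y - x‖ := by
    intro k
    induction k using Fin.lastCases with
    | last => simp [hv, Fin.snoc_last, norm_nonneg]
    | cast j =>
      rw [hv]
      simp only [Fin.snoc_castSucc]
      have := norm_le_pi_norm (y - x) j
      simpa [Real.norm_eq_abs] using this
  have key := lse_bounds N z v ‖y - x‖ hs
  have hzsum : ∑ k, Real.exp (z k) = 1 + ∑ j, Real.exp (x j) := by
    rw [hz, Fin.sum_univ_castSucc]
    simp [add_comm]
  have hzvsum : ∑ k, Real.exp (z k + v k) = 1 + ∑ j, Real.exp (y j) := by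
    rw [hz, hv, Fin.sum_univ_castSucc]
    simp only [Fin.snoc_castSucc, Fin.snoc_last, add_zero, Real.exp_zero]
    rw [add_comm]
    congr 1
    apply Finset.sum_congr rfl
    intro j _
    congr 1
    ring
  have hB0 : ∑ k, v k * Real.exp (z k) = ∑ j, (y j - x j) * Real.exp (x j) := by
    rw [hz, hv, Fin.sum_univ_castSucc]
    simp [Fin.snoc_castSucc, Fin.snoc_last]
  rw [hzsum, hzvsum, hB0] at key
  have hsum1 : ∑ k, (Real.exp (x k) / (1 + ∑ i, Real.exp (x i)) - w k) * (y k - x k)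
      = (∑ j, (y j - x j) * Real.exp (x j)) / (1 + ∑ i, Real.exp (x i))
        - ∑ k, w k * (y k - x k) := by
    rw [Finset.sum_div, ← Finset.sum_sub_distrib]
    apply Finset.sum_congr rfl
    intro k _
    ring
  have hsum2 : ∑ k, w k * (y k - x k) = (∑ j, w j * y j) - ∑ j, w j * x j := by
    rw [← Finset.sum_sub_distrib]
    apply Finset.sum_congr rfl
    intro k _
    ring
  rw [hsum1, hsum2]
  constructor
  · linarith [key.1]
  · linarith [key.2]

set_option maxHeartbeats 1000000 in
theorem main_aux (n : ℕ)
    (H : ℝ) (hH : H = ∑ j : Fin (n + 2), (1 : ℝ) / ((j : ℕ) + 1))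
    (p : Fin (n + 2) → ℝ) (hp : ∀ k, p k = ((1 : ℝ) / ((k : ℕ) + 1)) / H)
    (q : (Fin (n + 1) → ℝ) → Fin (n + 2) → ℝ)
    (hq : ∀ (θ : Fin (n + 1) → ℝ) (k : Fin (n + 2)),
      q θ k = (if h : (k : ℕ) < n + 1 then Real.exp (θ ⟨k, h⟩) else 1) /
        (1 + ∑ j, Real.exp (θ j)))
    (ftil : (Fin (n + 1) → ℝ) → ℝ)
    (hf : ftil = fun θ => ∑ k, p k * Real.log (p k / q θ k))
    (lam : ℝ) (hlam : lam = 1 / Real.log ((n + 2 : ℕ) : ℝ))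
    (η : ℕ → ℝ) (hη : ∀ t : ℕ, η t = 2 / (lam * ((t : ℝ) + 1)))
    (θ Δ : ℕ → Fin (n + 1) → ℝ) (hθ0 : θ 0 = 0)
    (hΔnorm : ∀ t, ‖Δ t‖ ≤ 1)
    (hΔdir : ∀ t, (∑ k, grad ftil (θ t) k * Δ t k) = l1norm (grad ftil (θ t)))
    (hupdate : ∀ t, θ (t + 1) = (1 - lam * η t) • θ t - η t • Δ t) :
    ∀ T : ℕ, 1 ≤ T →
      ftil (θ T) - (⨅ ξ : Fin (n + 1) → ℝ, ftil ξ) ≤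
        8 * (Real.log ((n + 2 : ℕ) : ℝ)) ^ 2 / ((T : ℝ) + 2) := by
  set c : ℝ := Real.log ((n + 2 : ℕ) : ℝ) with hc
  have hcast : ((n + 2 : ℕ) : ℝ) = (n : ℝ) + 2 := by push_cast; ring
  have hc1 : (1 : ℝ) < ((n + 2 : ℕ) : ℝ) := by rw [hcast]; linarith [Nat.cast_nonneg (α := ℝ) n]
  have cpos : 0 < c := Real.log_pos hc1
  have Hpos : 0 < H := by
    rw [hH]
    apply Finset.sum_pos (fun j _ => by positivity) Finset.univ_nonempty
  have hpk : ∀ k : Fin (n + 2), 0 < p k := fun k => by rw [hp]; positivity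
  have hsum1 : ∑ k : Fin (n + 2), p k = 1 := by
    have e : ∑ k : Fin (n + 2), p k = (∑ k : Fin (n + 2), (1 : ℝ) / ((k : ℕ) + 1)) / H := by
      rw [Finset.sum_div]; exact Finset.sum_congr rfl fun k _ => hp k
    rw [e, ← hH, div_self Hpos.ne']
  set w : Fin (n + 1) → ℝ := fun j => (1 : ℝ) / ((j : ℕ) + 1) / H with hw
  set Cst : ℝ := ∑ k : Fin (n + 2), p k * Real.log (p k) with hCst
  -- closed form
  have hclosed : ∀ x : Fin (n + 1) → ℝ,
      ftil x = Cst + Real.log (1 + ∑ j, Real.exp (x j)) - ∑ j, w j * x j := by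
    intro x
    simp only [hf]
    have hS : (0 : ℝ) < 1 + ∑ j, Real.exp (x j) := by positivity
    have hterm : ∀ k : Fin (n + 2),
        p k * Real.log (p k / q x k)
          = p k * Real.log (p k)
            - p k * (if h : (k : ℕ) < n + 1 then x ⟨k, h⟩ else 0)
            + p k * Real.log (1 + ∑ j, Real.exp (x j)) := by
      intro k
      have hnum : (0 : ℝ) < (if h : (k : ℕ) < n + 1 then Real.exp (x ⟨k, h⟩) else 1) := by
        split_ifs <;> positivity
      rw [hq]
      rw [Real.log_div (hpk k).ne' (by positivity), Real.log_div hnum.ne' hS.ne']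
      have hlognum : Real.log (if h : (k : ℕ) < n + 1 then Real.exp (x ⟨k, h⟩) else 1)
          = (if h : (k : ℕ) < n + 1 then x ⟨k, h⟩ else 0) := by
        split_ifs with h
        · exact Real.log_exp _
        · exact Real.log_one
      rw [hlognum]; ring
    rw [Finset.sum_congr rfl fun k _ => hterm k]
    rw [Finset.sum_add_distrib, Finset.sum_sub_distrib, ← Finset.sum_mul, hsum1, one_mul]
    have hdite : ∑ k : Fin (n + 2), p k * (if h : (k : ℕ) < n + 1 then x ⟨k, h⟩ else 0)
        = ∑ j : Fin (n + 1), w j * x j := by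
      rw [Fin.sum_univ_castSucc]
      simp only [Fin.coe_castSucc, Fin.val_last, Fin.is_lt, dite_true]
      rw [dif_neg (lt_irrefl (n + 1)), mul_zero, add_zero]
      apply Finset.sum_congr rfl
      intro j _
      rw [hp, hw]
      congr 1
    rw [hdite]; ring
  set G : (Fin (n + 1) → ℝ) → Fin (n + 1) → ℝ :=
    fun x k => Real.exp (x k) / (1 + ∑ i, Real.exp (x i)) - w k with hG
  have hfeq : ftil = fun x => Cst + Real.log (1 + ∑ j, Real.exp (x j)) - ∑ j, w j * x j :=
    funext hclosed
  have hgrad : ∀ x, grad ftil x = G x := by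
    intro x
    rw [hfeq, logistic_grad]
  have hcs := logistic_conv_smooth (n + 1) Cst w ftil hclosed
  -- the minimizer
  set θstar : Fin (n + 1) → ℝ := fun j => Real.log (((n : ℝ) + 2) / ((j : ℕ) + 1)) with hθstar
  have hstar_exp : ∀ j : Fin (n + 1), Real.exp (θstar j) = ((n : ℝ) + 2) / ((j : ℕ) + 1) := by
    intro j
    rw [hθstar]
    exact Real.exp_log (by positivity)
  have hHsplit : H = (∑ j : Fin (n + 1), (1 : ℝ) / ((j : ℕ) + 1)) + 1 / ((n : ℝ) + 2) := by
    rw [hH, Fin.sum_univ_castSucc]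
    simp only [Fin.coe_castSucc, Fin.val_last]
    push_cast
    ring
  have hSstar : 1 + ∑ j : Fin (n + 1), Real.exp (θstar j) = ((n : ℝ) + 2) * H := by
    have e3 : ∀ j : Fin (n + 1), Real.exp (θstar j)
        = ((n : ℝ) + 2) * ((1 : ℝ) / ((j : ℕ) + 1)) := fun j => by rw [hstar_exp]; ring
    rw [Finset.sum_congr rfl fun j _ => e3 j, ← Finset.mul_sum, hHsplit]
    have hne : ((n : ℝ) + 2) ≠ 0 := by positivity
    field_simp
    ring
  have hGk : ∀ (x : Fin (n + 1) → ℝ) (k : Fin (n + 1)),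
      G x k = Real.exp (x k) / (1 + ∑ i, Real.exp (x i)) - w k := fun x k => rfl
  simp only [← hGk] at hcs
  have hgstar : ∀ k, G θstar k = 0 := by
    intro k
    show Real.exp (θstar k) / (1 + ∑ i, Real.exp (θstar i)) - w k = 0
    rw [hSstar, hstar_exp, hw]
    have h1 : ((k : ℕ) : ℝ) + 1 ≠ 0 := by positivity
    have h2 : ((n : ℝ) + 2) ≠ 0 := by positivity
    field_simp
    ring
  have hstar_bd : ∀ j : Fin (n + 1), |θstar j| ≤ c := by
    intro j
    have h1 : (1 : ℝ) ≤ ((n : ℝ) + 2) / (((j : ℕ) : ℝ) + 1) := by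
      rw [le_div_iff₀ (by positivity)]
      have hj : ((j : ℕ) : ℝ) ≤ (n : ℝ) := by
        have := j.isLt
        exact_mod_cast Nat.lt_succ_iff.mp this
      linarith
    have h2 : ((n : ℝ) + 2) / (((j : ℕ) : ℝ) + 1) ≤ (n : ℝ) + 2 := by
      rw [div_le_iff₀ (by positivity)]
      nlinarith [Nat.cast_nonneg (α := ℝ) (j : ℕ)]
    rw [hθstar, abs_of_nonneg (Real.log_nonneg h1)]
    rw [hc, hcast]
    exact Real.log_le_log (by positivity) h2
  have hstar_norm : ‖θstar‖ ≤ c := by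
    rw [pi_norm_le_iff_of_nonneg cpos.le]
    intro j
    rw [Real.norm_eq_abs]
    exact hstar_bd j
  have hmin : ∀ ξ, ftil θstar ≤ ftil ξ := by
    intro ξ
    have h := (hcs θstar ξ).1
    have hz : ∑ k, G θstar k * (ξ k - θstar k) = 0 :=
      Finset.sum_eq_zero fun k _ => by rw [hgstar k, zero_mul]
    rw [hz] at h
    linarith
  set Fstar : ℝ := ftil θstar with hFstar
  have hinf : (⨅ ξ : Fin (n + 1) → ℝ, ftil ξ) = Fstar := by
    apply le_antisymm
    · exact ciInf_le ⟨Fstar, by rintro r ⟨ξ, rfl⟩; exact hmin ξ⟩ θstar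
    · exact le_ciInf hmin
  -- step-size facts
  have lampos : 0 < lam := by rw [hlam]; positivity
  have hγ : ∀ t : ℕ, lam * η t = 2 / ((t : ℝ) + 1) := by
    intro t
    rw [hη]
    have h1 : ((t : ℝ) + 1) ≠ 0 := by positivity
    have h0 : lam ≠ 0 := lampos.ne'
    field_simp
  have hηval : ∀ t : ℕ, η t = 2 * c / ((t : ℝ) + 1) := by
    intro t
    rw [hη, hlam]
    have h1 : ((t : ℝ) + 1) ≠ 0 := by positivity
    have h0 : c ≠ 0 := cpos.ne'
    field_simp
  have hηpos : ∀ t : ℕ, 0 < η t := by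
    intro t
    rw [hηval]
    positivity
  -- norm bounds on iterates
  have hB : ∀ t, 2 ≤ t → ‖θ t‖ ≤ c := by
    intro t ht
    induction t, ht using Nat.le_induction with
    | base =>
      have hγ1 : lam * η 1 = 1 := by rw [hγ]; norm_num
      rw [hupdate 1, hγ1, sub_self, zero_smul, zero_sub, norm_neg, norm_smul,
        Real.norm_eq_abs, abs_of_pos (hηpos 1)]
      calc η 1 * ‖Δ 1‖ ≤ η 1 * 1 := mul_le_mul_of_nonneg_left (hΔnorm 1) (hηpos 1).le
        _ = c := by rw [mul_one, hηval]; norm_num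
    | succ t ht ih =>
      rw [hupdate t]
      calc ‖(1 - lam * η t) • θ t - η t • Δ t‖
          ≤ ‖(1 - lam * η t) • θ t‖ + ‖η t • Δ t‖ := norm_sub_le _ _
        _ = |1 - lam * η t| * ‖θ t‖ + |η t| * ‖Δ t‖ := by
            rw [norm_smul, norm_smul, Real.norm_eq_abs, Real.norm_eq_abs]
        _ ≤ (1 - 2 / ((t : ℝ) + 1)) * c + η t * 1 := by
            have ht1 : (1 : ℝ) ≤ (t : ℝ) := by
              have : 1 ≤ t := by omega
              exact_mod_cast this
            have h2 : 2 / ((t : ℝ) + 1) ≤ 1 := by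
              rw [div_le_one (by positivity)]; linarith
            have h3 : |1 - lam * η t| = 1 - 2 / ((t : ℝ) + 1) := by
              rw [hγ, abs_of_nonneg (by linarith)]
            rw [h3, abs_of_pos (hηpos t)]
            apply add_le_add
            · apply mul_le_mul_of_nonneg_left ih (by linarith)
            · exact mul_le_mul_of_nonneg_left (hΔnorm t) (hηpos t).le
        _ = c := by
            rw [hηval, mul_one]
            have h1 : ((t : ℝ) + 1) ≠ 0 := by positivity
            field_simp
            ring
  -- key descent step
  have hstep : ∀ t : ℕ, ftil (θ (t + 1)) ≤ ftil (θ t)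
      + (2 / ((t : ℝ) + 1)) * (Fstar - ftil (θ t))
      + (2 / ((t : ℝ) + 1)) ^ 2 * (‖θ t‖ + c) ^ 2 / 2 := by
    intro t
    set γ : ℝ := 2 / ((t : ℝ) + 1) with hγdef
    have hγpos : 0 < γ := by rw [hγdef]; positivity
    have hγeq : lam * η t = γ := (hγ t).trans hγdef.symm
    have hηγ : η t = γ * c := by rw [hηval, hγdef]; ring
    have hsm := (hcs (θ t) (θ (t + 1))).2
    have hdiffk : ∀ k, θ (t + 1) k - θ t k = -(γ * θ t k) - η t * Δ t k := by
      intro k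
      rw [hupdate t, hγeq]
      simp only [Pi.sub_apply, Pi.smul_apply, smul_eq_mul]
      ring
    have hl1 : ∑ k, G (θ t) k * Δ t k = ∑ k, |G (θ t) k| := by
      have h := hΔdir t
      rw [hgrad] at h
      simpa [l1norm] using h
    have hipstar : -(c * ∑ k, |G (θ t) k|) ≤ ∑ k, G (θ t) k * θstar k := by
      rw [Finset.mul_sum, ← Finset.sum_neg_distrib]
      apply Finset.sum_le_sum
      intro k _
      have h1 : |G (θ t) k * θstar k| ≤ |G (θ t) k| * c := by
        rw [abs_mul]
        exact mul_le_mul_of_nonneg_left (hstar_bd k) (abs_nonneg _)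
      have h2 := neg_abs_le (G (θ t) k * θstar k)
      nlinarith [abs_nonneg (G (θ t) k)]
    have hip : ∑ k, G (θ t) k * (θ (t + 1) k - θ t k) ≤ γ * (Fstar - ftil (θ t)) := by
      have e : ∀ k ∈ Finset.univ, G (θ t) k * (θ (t + 1) k - θ t k)
          = -(γ * (G (θ t) k * θ t k)) - η t * (G (θ t) k * Δ t k) := by
        intro k _; rw [hdiffk k]; ring
      rw [Finset.sum_congr rfl e, Finset.sum_sub_distrib]
      have e1 : ∑ k, -(γ * (G (θ t) k * θ t k)) = -(γ * ∑ k, G (θ t) k * θ t k) := by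
        rw [Finset.sum_neg_distrib, ← Finset.mul_sum]
      have e2 : ∑ k, η t * (G (θ t) k * Δ t k) = η t * ∑ k, G (θ t) k * Δ t k :=
        (Finset.mul_sum _ _ _).symm
      rw [e1, e2, hl1]
      have h3 : -(η t * ∑ k, |G (θ t) k|) ≤ γ * ∑ k, G (θ t) k * θstar k := by
        rw [hηγ]
        have h4 := mul_le_mul_of_nonneg_left hipstar hγpos.le
        linarith
      have hconv2 := (hcs (θ t) θstar).1
      have h4 : ∑ k, G (θ t) k * (θstar k - θ t k)
          = ∑ k, G (θ t) k * θstar k - ∑ k, G (θ t) k * θ t k := by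
        rw [← Finset.sum_sub_distrib]
        exact Finset.sum_congr rfl fun k _ => by ring
      have h5 : ∑ k, G (θ t) k * θstar k - ∑ k, G (θ t) k * θ t k ≤ Fstar - ftil (θ t) := by
        rw [← h4]; linarith
      have h6 := mul_le_mul_of_nonneg_left h5 hγpos.le
      linarith
    have hnormstep : ‖θ (t + 1) - θ t‖ ≤ γ * (‖θ t‖ + c) := by
      have hv : θ (t + 1) - θ t = (-γ) • θ t - η t • Δ t := by
        rw [hupdate t, hγeq]
        module
      rw [hv]
      calc ‖(-γ) • θ t - η t • Δ t‖ ≤ ‖(-γ) • θ t‖ + ‖η t • Δ t‖ := norm_sub_le _ _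
        _ = γ * ‖θ t‖ + η t * ‖Δ t‖ := by
            rw [norm_smul, norm_smul, Real.norm_eq_abs, Real.norm_eq_abs, abs_neg,
              abs_of_pos hγpos, abs_of_pos (hηpos t)]
        _ ≤ γ * ‖θ t‖ + η t * 1 := by nlinarith [hηpos t, hΔnorm t]
        _ = γ * (‖θ t‖ + c) := by rw [hηγ]; ring
    have hsq : ‖θ (t + 1) - θ t‖ ^ 2 ≤ γ ^ 2 * (‖θ t‖ + c) ^ 2 := by
      nlinarith [norm_nonneg (θ (t + 1) - θ t), hnormstep]
    linarith [hsm, hip, hsq]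
  -- main induction
  suffices hmain : ∀ T : ℕ, 1 ≤ T → ftil (θ T) - Fstar ≤ 8 * c ^ 2 / ((T : ℝ) + 2) by
    intro T hT
    rw [hinf]
    exact hmain T hT
  intro T hT
  induction T, hT using Nat.le_induction with
  | base =>
    have h := hstep 0
    rw [hθ0] at h
    simp only [Nat.cast_zero, norm_zero, zero_add] at h
    have h0 : Fstar ≤ ftil 0 := hmin 0
    norm_num at h ⊢
    nlinarith [sq_nonneg c]
  | succ t ht ih =>
    by_cases h1 : t = 1
    · subst h1
      have hsm2 := (hcs θstar (θ 2)).2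
      have hz : ∑ k, G θstar k * (θ 2 k - θstar k) = 0 :=
        Finset.sum_eq_zero fun k _ => by rw [hgstar k, zero_mul]
      rw [hz] at hsm2
      have hn2 : ‖θ 2 - θstar‖ ≤ 2 * c := by
        calc ‖θ 2 - θstar‖ ≤ ‖θ 2‖ + ‖θstar‖ := norm_sub_le _ _
          _ ≤ c + c := add_le_add (hB 2 le_rfl) hstar_norm
          _ = 2 * c := by ring
      have hsq2 : ‖θ 2 - θstar‖ ^ 2 ≤ 4 * c ^ 2 := by
        nlinarith [norm_nonneg (θ 2 - θstar)]
      norm_num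
      linarith [hsm2, hsq2]
    · have ht2 : 2 ≤ t := by omega
      have hstept := hstep t
      have hBt := hB t ht2
      have hnn : 0 ≤ ftil (θ t) - Fstar := by linarith [hmin (θ t)]
      have hT2 : (2 : ℝ) ≤ (t : ℝ) := by exact_mod_cast ht2
      have p1 : (0 : ℝ) < (t : ℝ) + 1 := by linarith
      have p2 : (0 : ℝ) < (t : ℝ) + 2 := by linarith
      have p3 : (0 : ℝ) < (t : ℝ) + 3 := by linarith
      set γ : ℝ := 2 / ((t : ℝ) + 1) with hγdef
      have hγpos : 0 < γ := by rw [hγdef]; positivity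
      have hγ1 : γ ≤ 1 := by rw [hγdef, div_le_one p1]; linarith
      have e1 : ftil (θ (t + 1)) - Fstar ≤ (1 - γ) * (ftil (θ t) - Fstar) + 2 * γ ^ 2 * c ^ 2 := by
        have hsqb : (‖θ t‖ + c) ^ 2 ≤ 4 * c ^ 2 := by
          nlinarith [norm_nonneg (θ t), cpos]
        nlinarith [sq_nonneg γ]
      have e2 : (1 - γ) * (ftil (θ t) - Fstar) ≤ (1 - γ) * (8 * c ^ 2 / ((t : ℝ) + 2)) :=
        mul_le_mul_of_nonneg_left ih (by linarith)
      have key0 : (1 - γ) * (8 * c ^ 2 / ((t : ℝ) + 2)) + 2 * γ ^ 2 * c ^ 2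
          ≤ 8 * c ^ 2 / ((t : ℝ) + 3) := by
        rw [hγdef, ← sub_nonneg]
        have e : 8 * c ^ 2 / ((t : ℝ) + 3)
            - ((1 - 2 / ((t : ℝ) + 1)) * (8 * c ^ 2 / ((t : ℝ) + 2))
              + 2 * (2 / ((t : ℝ) + 1)) ^ 2 * c ^ 2)
            = c ^ 2 * (8 * ((t : ℝ) - 1)) / (((t : ℝ) + 1) ^ 2 * ((t : ℝ) + 2) * ((t : ℝ) + 3)) := by
          field_simp
          ring
        rw [e]
        apply div_nonneg _ (by positivity)
        nlinarith [sq_nonneg c]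
      have goalcast : ((t + 1 : ℕ) : ℝ) + 2 = (t : ℝ) + 3 := by push_cast; ring
      rw [goalcast]
      linarith [e1, e2, key0]

/-- sign descent with weight decay `λ = 1/log d` and `η_t = 2/(λ(t+1))`,
started at `θ₀ = 0`, on the additive logistic unigram loss `f̃(θ) = KL(p‖q(θ))` (on
`ℝ^{d−1}`, with `q(θ)_k = exp(θ_k)/(1 + ∑_j exp(θ_j))` for `k ≤ d−1` and
`q(θ)_d = 1/(1 + ∑_j exp(θ_j))`, and heavy-tailed `p_k = (1/k)/H_d`) satisfies
`f̃(θ_T) − min f̃ ≤ 8(log d)²/(T+2)` for all `T ≥ 1`.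
(The norm on `Fin (d−1) → ℝ` is the sup norm, so `‖Δ_t‖ ≤ 1` is the ℓ∞ constraint.) -/
theorem sign_descent_wd_additive_logistic (d : ℕ) (hd : 2 ≤ d)
    (H : ℝ) (hH : H = ∑ j : Fin d, (1 : ℝ) / ((j : ℕ) + 1))
    (p : Fin d → ℝ) (hp : ∀ k, p k = ((1 : ℝ) / ((k : ℕ) + 1)) / H)
    (q : (Fin (d - 1) → ℝ) → Fin d → ℝ)
    (hq : ∀ (θ : Fin (d - 1) → ℝ) (k : Fin d),
      q θ k = (if h : (k : ℕ) < d - 1 then Real.exp (θ ⟨k, h⟩) else 1) /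
        (1 + ∑ j, Real.exp (θ j)))
    (ftil : (Fin (d - 1) → ℝ) → ℝ)
    (hf : ftil = fun θ => ∑ k, p k * Real.log (p k / q θ k))
    (lam : ℝ) (hlam : lam = 1 / Real.log d)
    (η : ℕ → ℝ) (hη : ∀ t : ℕ, η t = 2 / (lam * ((t : ℝ) + 1)))
    (θ Δ : ℕ → Fin (d - 1) → ℝ) (hθ0 : θ 0 = 0)
    (hΔnorm : ∀ t, ‖Δ t‖ ≤ 1)
    (hΔdir : ∀ t, (∑ k, grad ftil (θ t) k * Δ t k) = l1norm (grad ftil (θ t)))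
    (hupdate : ∀ t, θ (t + 1) = (1 - lam * η t) • θ t - η t • Δ t) :
    ∀ T : ℕ, 1 ≤ T →
      ftil (θ T) - (⨅ ξ : Fin (d - 1) → ℝ, ftil ξ) ≤
        8 * (Real.log d) ^ 2 / ((T : ℝ) + 2) := by
  obtain ⟨n, rfl⟩ : ∃ n, d = n + 2 := ⟨d - 2, by omega⟩
  exact main_aux n H hH p hp q hq ftil hf lam hlam η hη θ Δ hθ0 hΔnorm hΔdir hupdate
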